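/- arXiv:2003.04108 — 3 statements merged into one kernel-verified Lean document; each statement's English description precedes it below -/
import Mathlib

section
/- Performance difference lemma: for all policies π and π' of a finite discounted MDP, J(π') = J(π) + ∑_{s∈S} d^{π'}_ρ(s) ∑_{a∈A} π'(a|s) A^π(s,a). -/
/-!
Write `Δ = V' - V` and `M` for the state transition matrix of `π'`. The Bellman equation of `V'`
turns the averaged advantage into `g = Δ - γ M Δ`, so the `t`-th term `γ ^ t ⟨d_t, g⟩` of the
visitation series is the difference `u t - u (t + 1)` of `u t = γ ^ t ⟨d_t, Δ⟩`, where
`d_{t+1} = d_t M`. Since `M` does not increase the `ℓ¹`-norm, `d_t` stays bounded and the series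
telescopes to `u 0 = ⟨ρ, Δ⟩`.
-/

open Finset

noncomputable section

variable {S A : Type*} [Fintype S] [Fintype A]

/-- The t-step state distribution of policy `π` started from `ρ`. -/
def stateDist (P : S → A → S → ℝ) (π : S → A → ℝ) (ρ : S → ℝ) : ℕ → S → ℝ
  | 0 => ρ
  | t + 1 => fun s' => ∑ s, ∑ a, stateDist P π ρ t s * π s a * P s a s'

/-- The discounted state visitation distribution `d^π_ρ`. -/
def dvisit (P : S → A → S → ℝ) (π : S → A → ℝ) (ρ : S → ℝ) (γ : ℝ) (s : S) : ℝ :=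
  (1 - γ) * ∑' t : ℕ, γ ^ t * stateDist P π ρ t s

theorem Summable.tsum_sub_succ {G : Type*} [AddCommGroup G] [TopologicalSpace G]
    [IsTopologicalAddGroup G] [T2Space G] {f : ℕ → G} (hf : Summable f) :
    ∑' n, (f n - f (n + 1)) = f 0 := by
  rw [hf.tsum_sub ((summable_nat_add_iff 1).2 hf), hf.tsum_eq_zero_add, add_sub_cancel_right]

theorem sum_abs_sum_mul_le_of_stochastic {ι κ : Type*} [Fintype ι] [Fintype κ]
    {K : ι → κ → ℝ} (hK0 : ∀ i j, 0 ≤ K i j) (hK1 : ∀ i, ∑ j, K i j = 1) (x : ι → ℝ) :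
    ∑ j, |∑ i, x i * K i j| ≤ ∑ i, |x i| :=
  calc ∑ j, |∑ i, x i * K i j|
      ≤ ∑ j, ∑ i, |x i| * K i j := sum_le_sum fun j _ => (abs_sum_le_sum_abs _ _).trans_eq <|
        sum_congr rfl fun i _ => by rw [abs_mul, abs_of_nonneg (hK0 i j)]
    _ = ∑ i, |x i| := by rw [sum_comm]; simp [← mul_sum, hK1]

def policyTransition (P : S → A → S → ℝ) (π : S → A → ℝ) (s s' : S) : ℝ :=
  ∑ a, π s a * P s a s'

section

variable {P : S → A → S → ℝ} {π : S → A → ℝ}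

theorem sum_policyTransition (hP1 : ∀ s a, ∑ s', P s a s' = 1) (hπ1 : ∀ s, ∑ a, π s a = 1)
    (s : S) : ∑ s', policyTransition P π s s' = 1 := by
  simp only [policyTransition]
  rw [sum_comm]
  simp [← mul_sum, hP1, hπ1]

theorem stateDist_succ (ρ : S → ℝ) (t : ℕ) (s' : S) :
    stateDist P π ρ (t + 1) s' = ∑ s, stateDist P π ρ t s * policyTransition P π s s' := by
  simp only [stateDist, policyTransition, mul_sum, mul_assoc]

theorem sum_stateDist_mul_policyTransition (ρ f : S → ℝ) (t : ℕ) :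
    ∑ s, stateDist P π ρ t s * ∑ s', policyTransition P π s s' * f s'
      = ∑ s', stateDist P π ρ (t + 1) s' * f s' := by
  simp only [stateDist_succ, mul_sum, sum_mul]
  rw [sum_comm]
  simp only [mul_assoc]

theorem sum_abs_stateDist_le (hP0 : ∀ s a s', 0 ≤ P s a s') (hP1 : ∀ s a, ∑ s', P s a s' = 1)
    (hπ0 : ∀ s a, 0 ≤ π s a) (hπ1 : ∀ s, ∑ a, π s a = 1) (ρ : S → ℝ) (t : ℕ) :
    ∑ s, |stateDist P π ρ t s| ≤ ∑ s, |ρ s| := by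
  induction t with
  | zero => rfl
  | succ t ih =>
    simp only [stateDist_succ]
    exact (sum_abs_sum_mul_le_of_stochastic
      (fun s s' => sum_nonneg fun a _ => mul_nonneg (hπ0 s a) (hP0 s a s'))
      (sum_policyTransition hP1 hπ1) _).trans ih

theorem summable_geometric_mul_stateDist (hP0 : ∀ s a s', 0 ≤ P s a s')
    (hP1 : ∀ s a, ∑ s', P s a s' = 1) (hπ0 : ∀ s a, 0 ≤ π s a) (hπ1 : ∀ s, ∑ a, π s a = 1)
    {γ : ℝ} (hγ0 : 0 ≤ γ) (hγ1 : γ < 1) (ρ : S → ℝ) (s : S) :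
    Summable fun t => γ ^ t * stateDist P π ρ t s := by
  refine .of_norm_bounded ((summable_geometric_of_lt_one hγ0 hγ1).mul_right (∑ s, |ρ s|))
    fun t => ?_
  rw [norm_mul, norm_pow, Real.norm_of_nonneg hγ0, Real.norm_eq_abs]
  gcongr
  exact (single_le_sum (fun s _ => abs_nonneg (stateDist P π ρ t s)) (mem_univ s)).trans
    (sum_abs_stateDist_le hP0 hP1 hπ0 hπ1 ρ t)

theorem sum_dvisit_mul (hP0 : ∀ s a s', 0 ≤ P s a s') (hP1 : ∀ s a, ∑ s', P s a s' = 1)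
    (hπ0 : ∀ s a, 0 ≤ π s a) (hπ1 : ∀ s, ∑ a, π s a = 1)
    {γ : ℝ} (hγ0 : 0 ≤ γ) (hγ1 : γ < 1) (ρ f : S → ℝ) :
    ∑ s, dvisit P π ρ γ s * f s = (1 - γ) * ∑' t, γ ^ t * ∑ s, stateDist P π ρ t s * f s := by
  have hsum := fun s (_ : s ∈ univ) =>
    (summable_geometric_mul_stateDist hP0 hP1 hπ0 hπ1 hγ0 hγ1 ρ s).mul_right (f s)
  simp only [dvisit, mul_sum, ← mul_assoc, mul_assoc (1 - γ), ← tsum_mul_right]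
  rw [Summable.tsum_finsetSum hsum, mul_sum]

theorem sum_mul_advantage_eq {r : S → A → ℝ} {γ : ℝ} (hπ1 : ∀ s, ∑ a, π s a = 1) {V V' : S → ℝ}
    (hV' : ∀ s, V' s = ∑ a, π s a * (r s a + γ * ∑ s', P s a s' * V' s')) (s : S) :
    ∑ a, π s a * ((r s a + γ * ∑ s', P s a s' * V s') - V s)
      = (V' s - V s) - γ * ∑ s', policyTransition P π s s' * (V' s' - V s') := by
  have hVs : V s = ∑ a, π s a * V s := by rw [← sum_mul, hπ1, one_mul]
  have hMΔ : ∑ s', policyTransition P π s s' * (V' s' - V s')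
      = ∑ a, π s a * (∑ s', P s a s' * V' s' - ∑ s', P s a s' * V s') := by
    simp only [policyTransition, sum_mul, mul_sum, ← sum_sub_distrib]
    rw [sum_comm]
    exact sum_congr rfl fun a _ => sum_congr rfl fun s' _ => by ring
  rw [hMΔ, hV' s]
  conv_rhs => rw [hVs, mul_sum, ← sum_sub_distrib, ← sum_sub_distrib]
  exact sum_congr rfl fun a _ => by ring

end

theorem performance_difference_general
    (P : S → A → S → ℝ) (r : S → A → ℝ) (γ : ℝ) (ρ : S → ℝ)
    (hγ0 : 0 ≤ γ) (hγ1 : γ < 1)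
    (hP0 : ∀ s a s', 0 ≤ P s a s') (hP1 : ∀ s a, ∑ s', P s a s' = 1)
    (π' : S → A → ℝ)
    (hπ'0 : ∀ s a, 0 ≤ π' s a) (hπ'1 : ∀ s, ∑ a, π' s a = 1)
    (V V' : S → ℝ)
    (hV' : ∀ s, V' s = ∑ a, π' s a * (r s a + γ * ∑ s', P s a s' * V' s')) :
    (1 - γ) * ∑ s, ρ s * V' s
      = (1 - γ) * ∑ s, ρ s * V s
        + ∑ s, dvisit P π' ρ γ s *
            ∑ a, π' s a * ((r s a + γ * ∑ s', P s a s' * V s') - V s) := by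
  set u : ℕ → ℝ := fun t => γ ^ t * ∑ s, stateDist P π' ρ t s * (V' s - V s) with hu_def
  have hu : Summable u := by
    simp only [hu_def, mul_sum, ← mul_assoc]
    exact summable_sum fun s _ =>
      (summable_geometric_mul_stateDist hP0 hP1 hπ'0 hπ'1 hγ0 hγ1 ρ s).mul_right _
  have hterm : ∀ t, γ ^ t * ∑ s, stateDist P π' ρ t s *
      ∑ a, π' s a * ((r s a + γ * ∑ s', P s a s' * V s') - V s) = u t - u (t + 1) := by
    intro t
    simp only [sum_mul_advantage_eq hπ'1 hV']
    calc _ = γ ^ t * (∑ s, stateDist P π' ρ t s * (V' s - V s) - γ * ∑ s, stateDist P π' ρ t s *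
            ∑ s', policyTransition P π' s s' * (V' s' - V s')) := by
          congr 1
          rw [mul_sum, ← sum_sub_distrib]
          exact sum_congr rfl fun s _ => by ring
      _ = u t - u (t + 1) := by rw [sum_stateDist_mul_policyTransition]; ring
  rw [sum_dvisit_mul hP0 hP1 hπ'0 hπ'1 hγ0 hγ1, tsum_congr hterm, hu.tsum_sub_succ]
  simp only [hu_def, stateDist, pow_zero, one_mul, mul_sub, sum_sub_distrib]
  ring

/-- Performance difference lemma:
`J(π') = J(π) + ∑_s d^{π'}_ρ(s) ∑_a π'(a|s) A^π(s,a)`. -/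
theorem performance_difference
    [Nonempty S] [Nonempty A]
    (P : S → A → S → ℝ) (r : S → A → ℝ) (γ : ℝ) (ρ : S → ℝ)
    (hγ0 : 0 ≤ γ) (hγ1 : γ < 1)
    (hP0 : ∀ s a s', 0 ≤ P s a s') (hP1 : ∀ s a, ∑ s', P s a s' = 1)
    (hρ0 : ∀ s, 0 ≤ ρ s) (hρ1 : ∑ s, ρ s = 1)
    (π π' : S → A → ℝ)
    (hπ0 : ∀ s a, 0 ≤ π s a) (hπ1 : ∀ s, ∑ a, π s a = 1)
    (hπ'0 : ∀ s a, 0 ≤ π' s a) (hπ'1 : ∀ s, ∑ a, π' s a = 1)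
    (V V' : S → ℝ)
    (hV : ∀ s, V s = ∑ a, π s a * (r s a + γ * ∑ s', P s a s' * V s'))
    (hV' : ∀ s, V' s = ∑ a, π' s a * (r s a + γ * ∑ s', P s a s' * V' s')) :
    (1 - γ) * ∑ s, ρ s * V' s
      = (1 - γ) * ∑ s, ρ s * V s
        + ∑ s, dvisit P π' ρ γ s *
            ∑ a, π' s a * ((r s a + γ * ∑ s', P s a s' * V s') - V s) :=
  performance_difference_general P r γ ρ hγ0 hγ1 hP0 hP1 π' hπ'0 hπ'1 V V' hV'
end
end

section
/- For all policies π and π' of a finite discounted MDP, J(π') ≥ L_π(π') − (2γ·ε^π/(1−γ)) · ∑_{s∈S} d^π_ρ(s) · D_TV(π'(·|s) ‖ π(·|s)), where ε^π = max_{s∈S} |∑_{a∈A} π'(a|s) A^π(s,a)|. -/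
/-!
Let `d`, `d'` be the discounted visitation measures of `π`, `π'`. Both satisfy the flow equation
`d = (1 - γ) ρ + γ Pπᵀ d`, where `Pπᵀ d = pushforward P π d`. Pairing it with a function `f` gives
`∑ d (f - γ Pπ f) = (1 - γ) ∑ ρ f`, which turns the Bellman equation of `V'` into the performance
difference identity `J(π') = (1 - γ) ∑ ρ V + ∑ d' g`, where `g` is the expected advantage under `π'`.
Hence `L_π(π') - J(π') = ∑ (d - d') g ≤ ε ‖d - d'‖₁`. Subtracting the two flow equations,
`d - d' = γ (Pπ - Pπ')ᵀ d + γ Pπ'ᵀ (d - d')`, and `Pπ'ᵀ` does not increase the `ℓ¹` norm, so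
`(1 - γ) ‖d - d'‖₁ ≤ γ ∑ d(s) D_TV(π'(·|s) ‖ π(·|s))`: the bound holds even with `γ ε / (1 - γ)`.
-/

open Finset

noncomputable section

variable {S A : Type*} [Fintype S] [Fintype A]

/-- Total variation distance between real-valued functions on a finite set. -/
def dTV {X : Type*} [Fintype X] (p q : X → ℝ) : ℝ := ∑ x, |p x - q x|

def pushforward (P : S → A → S → ℝ) (μ : S → A → ℝ) (x : S → ℝ) (s' : S) : ℝ :=
  ∑ s, ∑ a, x s * μ s a * P s a s'

lemma dTV_comm {X : Type*} [Fintype X] (p q : X → ℝ) : dTV p q = dTV q p := by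
  simp only [dTV, abs_sub_comm]

section Kernel

variable {P : S → A → S → ℝ}

lemma sum_abs_sum_sum_mul_le (hP0 : ∀ s a s', 0 ≤ P s a s') (hP1 : ∀ s a, ∑ s', P s a s' = 1)
    (w : S → A → ℝ) : ∑ s', |∑ s, ∑ a, w s a * P s a s'| ≤ ∑ s, ∑ a, |w s a| :=
  calc ∑ s', |∑ s, ∑ a, w s a * P s a s'|
      ≤ ∑ s', ∑ s, ∑ a, |w s a| * P s a s' := by
        refine sum_le_sum fun s' _ => (abs_sum_le_sum_abs _ _).trans <| sum_le_sum fun s _ =>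
          (abs_sum_le_sum_abs _ _).trans_eq <| sum_congr rfl fun a _ => ?_
        rw [abs_mul, abs_of_nonneg (hP0 s a s')]
    _ = ∑ s, ∑ a, |w s a| * ∑ s', P s a s' := by
        simp only [mul_sum]
        rw [sum_comm]
        exact sum_congr rfl fun s _ => sum_comm
    _ = ∑ s, ∑ a, |w s a| := by simp only [hP1, mul_one]

variable {μ : S → A → ℝ}

lemma sum_abs_pushforward_le (hP0 : ∀ s a s', 0 ≤ P s a s') (hP1 : ∀ s a, ∑ s', P s a s' = 1)
    (hμ0 : ∀ s a, 0 ≤ μ s a) (hμ1 : ∀ s, ∑ a, μ s a = 1) (x : S → ℝ) :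
    ∑ s', |pushforward P μ x s'| ≤ ∑ s, |x s| :=
  (sum_abs_sum_sum_mul_le hP0 hP1 _).trans_eq <| sum_congr rfl fun s _ => by
    simp only [abs_mul, abs_of_nonneg (hμ0 s _), ← mul_sum, hμ1, mul_one]

lemma sum_abs_pushforward_sub_le (hP0 : ∀ s a s', 0 ≤ P s a s')
    (hP1 : ∀ s a, ∑ s', P s a s' = 1) (ν : S → A → ℝ) {x : S → ℝ} (hx : ∀ s, 0 ≤ x s) :
    ∑ s', |pushforward P μ x s' - pushforward P ν x s'| ≤ ∑ s, x s * dTV (μ s) (ν s) := by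
  have hsub : ∀ s', pushforward P μ x s' - pushforward P ν x s'
      = ∑ s, ∑ a, x s * (μ s a - ν s a) * P s a s' := fun s' => by
    simp only [pushforward, ← sum_sub_distrib, mul_sub, sub_mul]
  simp only [hsub]
  refine (sum_abs_sum_sum_mul_le hP0 hP1 _).trans_eq <| sum_congr rfl fun s _ => ?_
  simp only [dTV, abs_mul, abs_of_nonneg (hx s), mul_sum]

lemma pushforward_nonneg (hP0 : ∀ s a s', 0 ≤ P s a s') (hμ0 : ∀ s a, 0 ≤ μ s a) {x : S → ℝ}
    (hx : ∀ s, 0 ≤ x s) (s' : S) : 0 ≤ pushforward P μ x s' :=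
  sum_nonneg fun s _ => sum_nonneg fun a _ => mul_nonneg (mul_nonneg (hx s) (hμ0 s a)) (hP0 s a s')

lemma sum_pushforward_mul (x f : S → ℝ) :
    ∑ s', pushforward P μ x s' * f s' = ∑ s, x s * ∑ a, μ s a * ∑ s', P s a s' * f s' := by
  simp only [pushforward, sum_mul, mul_sum]
  rw [sum_comm]
  refine sum_congr rfl fun s _ => ?_
  rw [sum_comm]
  exact sum_congr rfl fun a _ => sum_congr rfl fun s' _ => by ring

lemma pushforward_sub (x y : S → ℝ) (s' : S) :
    pushforward P μ (fun s => x s - y s) s' = pushforward P μ x s' - pushforward P μ y s' := by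
  simp only [pushforward, ← sum_sub_distrib, sub_mul]

lemma tsum_pushforward {x : ℕ → S → ℝ} (hx : ∀ s, Summable fun t => x t s) (s' : S) :
    ∑' t, pushforward P μ (x t) s' = pushforward P μ (fun s => ∑' t, x t s) s' := by
  simp only [pushforward]
  rw [Summable.tsum_finsetSum fun s _ => summable_sum fun a _ => ((hx s).mul_right _).mul_right _]
  refine sum_congr rfl fun s _ => ?_
  rw [Summable.tsum_finsetSum fun a _ => ((hx s).mul_right _).mul_right _]
  simp only [tsum_mul_right]

lemma pushforward_const_mul (c : ℝ) (x : S → ℝ) (s' : S) :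
    pushforward P μ (fun s => c * x s) s' = c * pushforward P μ x s' := by
  simp only [pushforward, mul_sum, mul_assoc]

end Kernel

section Visitation

variable {P : S → A → S → ℝ} {μ : S → A → ℝ} {ρ : S → ℝ}

lemma stateDist_succ_s4 (t : ℕ) :
    stateDist P μ ρ (t + 1) = pushforward P μ (stateDist P μ ρ t) := rfl

lemma stateDist_nonneg (hP0 : ∀ s a s', 0 ≤ P s a s') (hμ0 : ∀ s a, 0 ≤ μ s a)
    (hρ0 : ∀ s, 0 ≤ ρ s) (t : ℕ) (s : S) : 0 ≤ stateDist P μ ρ t s := by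
  induction t generalizing s with
  | zero => exact hρ0 s
  | succ t ih => exact pushforward_nonneg hP0 hμ0 ih s

lemma abs_stateDist_le (hP0 : ∀ s a s', 0 ≤ P s a s') (hP1 : ∀ s a, ∑ s', P s a s' = 1)
    (hμ0 : ∀ s a, 0 ≤ μ s a) (hμ1 : ∀ s, ∑ a, μ s a = 1) (t : ℕ) (s : S) :
    |stateDist P μ ρ t s| ≤ ∑ s, |ρ s| := by
  have hmass : ∀ t, ∑ s, |stateDist P μ ρ t s| ≤ ∑ s, |ρ s| := fun t => by
    induction t with
    | zero => rfl
    | succ t ih => exact (sum_abs_pushforward_le hP0 hP1 hμ0 hμ1 _).trans ih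
  exact (single_le_sum (fun s _ => abs_nonneg (stateDist P μ ρ t s)) (mem_univ s)).trans
    (hmass t)

lemma summable_stateDist (hP0 : ∀ s a s', 0 ≤ P s a s') (hP1 : ∀ s a, ∑ s', P s a s' = 1)
    (hμ0 : ∀ s a, 0 ≤ μ s a) (hμ1 : ∀ s, ∑ a, μ s a = 1) {γ : ℝ} (hγ : |γ| < 1) (s : S) :
    Summable fun t => γ ^ t * stateDist P μ ρ t s := by
  refine Summable.of_norm_bounded
    ((summable_geometric_of_lt_one (abs_nonneg γ) hγ).mul_left (∑ s, |ρ s|)) fun t => ?_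
  rw [norm_mul, norm_pow, Real.norm_eq_abs, Real.norm_eq_abs, mul_comm]
  exact mul_le_mul_of_nonneg_right (abs_stateDist_le hP0 hP1 hμ0 hμ1 t s) (by positivity)

lemma dvisit_nonneg (hP0 : ∀ s a s', 0 ≤ P s a s') (hμ0 : ∀ s a, 0 ≤ μ s a)
    (hρ0 : ∀ s, 0 ≤ ρ s) {γ : ℝ} (hγ0 : 0 ≤ γ) (hγ1 : γ ≤ 1) (s : S) :
    0 ≤ dvisit P μ ρ γ s :=
  mul_nonneg (sub_nonneg.2 hγ1) <| tsum_nonneg fun t =>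
    mul_nonneg (pow_nonneg hγ0 t) (stateDist_nonneg hP0 hμ0 hρ0 t s)

lemma dvisit_eq_add_pushforward (hP0 : ∀ s a s', 0 ≤ P s a s') (hP1 : ∀ s a, ∑ s', P s a s' = 1)
    (hμ0 : ∀ s a, 0 ≤ μ s a) (hμ1 : ∀ s, ∑ a, μ s a = 1) {γ : ℝ} (hγ : |γ| < 1) (s' : S) :
    dvisit P μ ρ γ s' = (1 - γ) * ρ s' + γ * pushforward P μ (dvisit P μ ρ γ) s' := by
  have hsum := summable_stateDist (ρ := ρ) hP0 hP1 hμ0 hμ1 hγ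
  have hshift : ∀ t, γ ^ (t + 1) * stateDist P μ ρ (t + 1) s'
      = γ * pushforward P μ (fun s => γ ^ t * stateDist P μ ρ t s) s' := fun t => by
    rw [pushforward_const_mul, stateDist_succ_s4, pow_succ']
    ring
  have hd : dvisit P μ ρ γ = fun s => (1 - γ) * ∑' t, γ ^ t * stateDist P μ ρ t s := rfl
  rw [hd, pushforward_const_mul]
  dsimp only
  rw [(hsum s').tsum_eq_zero_add, tsum_congr hshift, tsum_mul_left, tsum_pushforward hsum]
  simp only [pow_zero, one_mul, stateDist]
  ring

lemma sum_dvisit_mul_sub (hP0 : ∀ s a s', 0 ≤ P s a s') (hP1 : ∀ s a, ∑ s', P s a s' = 1)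
    (hμ0 : ∀ s a, 0 ≤ μ s a) (hμ1 : ∀ s, ∑ a, μ s a = 1) {γ : ℝ} (hγ : |γ| < 1) (f : S → ℝ) :
    ∑ s, dvisit P μ ρ γ s * (f s - γ * ∑ a, μ s a * ∑ s', P s a s' * f s')
      = (1 - γ) * ∑ s, ρ s * f s := by
  have hflow : ∑ s, dvisit P μ ρ γ s * f s
      = (1 - γ) * ∑ s, ρ s * f s + γ * ∑ s, pushforward P μ (dvisit P μ ρ γ) s * f s := by
    rw [mul_sum, mul_sum, ← sum_add_distrib]
    exact sum_congr rfl fun s _ => by rw [dvisit_eq_add_pushforward hP0 hP1 hμ0 hμ1 hγ s]; ring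
  rw [sum_pushforward_mul] at hflow
  simp only [mul_sub, sum_sub_distrib, hflow, mul_left_comm _ γ, ← mul_sum]
  ring

end Visitation

lemma one_sub_mul_sum_abs_dvisit_sub_le {P : S → A → S → ℝ} {ρ : S → ℝ} {π π' : S → A → ℝ}
    (hP0 : ∀ s a s', 0 ≤ P s a s') (hP1 : ∀ s a, ∑ s', P s a s' = 1) (hρ0 : ∀ s, 0 ≤ ρ s)
    (hπ0 : ∀ s a, 0 ≤ π s a) (hπ1 : ∀ s, ∑ a, π s a = 1)
    (hπ'0 : ∀ s a, 0 ≤ π' s a) (hπ'1 : ∀ s, ∑ a, π' s a = 1) {γ : ℝ} (hγ0 : 0 ≤ γ) (hγ1 : γ < 1) :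
    (1 - γ) * ∑ s, |dvisit P π ρ γ s - dvisit P π' ρ γ s|
      ≤ γ * ∑ s, dvisit P π ρ γ s * dTV (π' s) (π s) := by
  have hγ : |γ| < 1 := abs_lt.2 ⟨by linarith, hγ1⟩
  have hflow := dvisit_eq_add_pushforward (ρ := ρ) hP0 hP1 hπ0 hπ1 hγ
  have hflow' := dvisit_eq_add_pushforward (ρ := ρ) hP0 hP1 hπ'0 hπ'1 hγ
  have hd0 : ∀ s, 0 ≤ dvisit P π ρ γ s := dvisit_nonneg hP0 hπ0 hρ0 hγ0 hγ1.le
  set d := dvisit P π ρ γ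
  set d' := dvisit P π' ρ γ
  have hΔ : ∀ s', d s' - d' s' = γ * (pushforward P π d s' - pushforward P π' d s'
      + pushforward P π' (fun s => d s - d' s) s') := fun s' => by
    rw [pushforward_sub, hflow s', hflow' s']
    ring
  have hcontract : ∑ s, |d s - d' s|
      ≤ γ * (∑ s, d s * dTV (π' s) (π s) + ∑ s, |d s - d' s|) :=
    calc ∑ s, |d s - d' s|
        = γ * ∑ s', |pushforward P π d s' - pushforward P π' d s'
            + pushforward P π' (fun s => d s - d' s) s'| := by
          rw [mul_sum]
          exact sum_congr rfl fun s' _ => by rw [hΔ s', abs_mul, abs_of_nonneg hγ0]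
      _ ≤ γ * (∑ s', |pushforward P π d s' - pushforward P π' d s'|
            + ∑ s', |pushforward P π' (fun s => d s - d' s) s'|) := by
          rw [← sum_add_distrib]
          exact mul_le_mul_of_nonneg_left (sum_le_sum fun s _ => abs_add_le _ _) hγ0
      _ ≤ γ * (∑ s, d s * dTV (π' s) (π s) + ∑ s, |d s - d' s|) := by
          refine mul_le_mul_of_nonneg_left (add_le_add ?_ ?_) hγ0
          · exact (sum_abs_pushforward_sub_le hP0 hP1 π' hd0).trans_eq
              (sum_congr rfl fun s _ => by rw [dTV_comm])
          · exact sum_abs_pushforward_le hP0 hP1 hπ'0 hπ'1 _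
  linarith

lemma sum_mul_sub_sum_mul_le {ι : Type*} (u : Finset ι) {x y g : ι → ℝ} {ε : ℝ}
    (hg : ∀ i ∈ u, |g i| ≤ ε) :
    ∑ i ∈ u, x i * g i - ∑ i ∈ u, y i * g i ≤ ε * ∑ i ∈ u, |x i - y i| := by
  rw [← sum_sub_distrib, mul_sum]
  refine sum_le_sum fun i hi => ?_
  calc x i * g i - y i * g i ≤ |(x i - y i) * g i| := by rw [← sub_mul]; exact le_abs_self _
    _ ≤ ε * |x i - y i| := by
      rw [abs_mul, mul_comm]; exact mul_le_mul_of_nonneg_right (hg i hi) (abs_nonneg _)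

lemma sum_advantage_eq {P : S → A → S → ℝ} {μ : S → A → ℝ} {r : S → A → ℝ} {γ : ℝ}
    (hμ1 : ∀ s, ∑ a, μ s a = 1) {V W : S → ℝ}
    (hW : ∀ s, W s = ∑ a, μ s a * (r s a + γ * ∑ s', P s a s' * W s')) (s : S) :
    ∑ a, μ s a * ((r s a + γ * ∑ s', P s a s' * V s') - V s)
      = (W s - V s) - γ * ∑ a, μ s a * ∑ s', P s a s' * (W s' - V s') := by
  have hPsub : ∀ a, ∑ s', P s a s' * (W s' - V s')
      = ∑ s', P s a s' * W s' - ∑ s', P s a s' * V s' := fun a => by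
    simp only [mul_sub, sum_sub_distrib]
  calc ∑ a, μ s a * ((r s a + γ * ∑ s', P s a s' * V s') - V s)
      = ∑ a, μ s a * (r s a + γ * ∑ s', P s a s' * V s') - (∑ a, μ s a) * V s := by
        rw [sum_mul, ← sum_sub_distrib]
        exact sum_congr rfl fun a _ => by ring
    _ = ∑ a, (μ s a * (r s a + γ * ∑ s', P s a s' * W s')
          - γ * (μ s a * ∑ s', P s a s' * (W s' - V s'))) - V s := by
        rw [hμ1, one_mul]
        exact congrArg (· - V s) (sum_congr rfl fun a _ => by rw [hPsub]; ring)
    _ = (W s - V s) - γ * ∑ a, μ s a * ∑ s', P s a s' * (W s' - V s') := by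
        rw [sum_sub_distrib, ← mul_sum, ← hW s]
        ring

theorem performance_difference_s4 {P : S → A → S → ℝ} {μ : S → A → ℝ} {ρ : S → ℝ}
    {r : S → A → ℝ} (hP0 : ∀ s a s', 0 ≤ P s a s') (hP1 : ∀ s a, ∑ s', P s a s' = 1)
    (hμ0 : ∀ s a, 0 ≤ μ s a) (hμ1 : ∀ s, ∑ a, μ s a = 1) {γ : ℝ} (hγ : |γ| < 1) {V W : S → ℝ}
    (hW : ∀ s, W s = ∑ a, μ s a * (r s a + γ * ∑ s', P s a s' * W s')) :
    (1 - γ) * ∑ s, ρ s * W s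
      = (1 - γ) * ∑ s, ρ s * V s
        + ∑ s, dvisit P μ ρ γ s * ∑ a, μ s a * ((r s a + γ * ∑ s', P s a s' * V s') - V s) := by
  have h := sum_dvisit_mul_sub (ρ := ρ) hP0 hP1 hμ0 hμ1 hγ fun s => W s - V s
  simp only [sum_advantage_eq (V := V) hμ1 hW]
  rw [h]
  simp only [mul_sub, sum_sub_distrib]
  ring

theorem surrogate_lower_bound_policy_tv_general
    [Nonempty S]
    (P : S → A → S → ℝ) (r : S → A → ℝ) (γ : ℝ) (ρ : S → ℝ)
    (hγ0 : 0 ≤ γ) (hγ1 : γ < 1)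
    (hP0 : ∀ s a s', 0 ≤ P s a s') (hP1 : ∀ s a, ∑ s', P s a s' = 1)
    (hρ0 : ∀ s, 0 ≤ ρ s)
    (π π' : S → A → ℝ)
    (hπ0 : ∀ s a, 0 ≤ π s a) (hπ1 : ∀ s, ∑ a, π s a = 1)
    (hπ'0 : ∀ s a, 0 ≤ π' s a) (hπ'1 : ∀ s, ∑ a, π' s a = 1)
    (V V' : S → ℝ)
    (hV' : ∀ s, V' s = ∑ a, π' s a * (r s a + γ * ∑ s', P s a s' * V' s')) :
    (1 - γ) * ∑ s, ρ s * V' s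
      ≥ ((1 - γ) * ∑ s, ρ s * V s
          + ∑ s, dvisit P π ρ γ s *
              ∑ a, π' s a * ((r s a + γ * ∑ s', P s a s' * V s') - V s))
        - (2 * γ * (Finset.univ.sup' Finset.univ_nonempty
              (fun s => |∑ a, π' s a * ((r s a + γ * ∑ s', P s a s' * V s') - V s)|))
            / (1 - γ))
          * ∑ s, dvisit P π ρ γ s * dTV (π' s) (π s) := by
  set g := fun s => ∑ a, π' s a * ((r s a + γ * ∑ s', P s a s' * V s') - V s)
  set ε := univ.sup' univ_nonempty fun s => |g s|
  have hgε : ∀ s, |g s| ≤ ε := fun s => le_sup' (fun s => |g s|) (mem_univ s)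
  have hε0 : 0 ≤ ε := (abs_nonneg _).trans (hgε (Classical.arbitrary S))
  have hTV0 : 0 ≤ ∑ s, dvisit P π ρ γ s * dTV (π' s) (π s) :=
    sum_nonneg fun s _ => mul_nonneg (dvisit_nonneg hP0 hπ0 hρ0 hγ0 hγ1.le s)
      (sum_nonneg fun a _ => abs_nonneg _)
  have hpdl := performance_difference_s4 (ρ := ρ) hP0 hP1 hπ'0 hπ'1 (abs_lt.2 ⟨by linarith, hγ1⟩)
    (V := V) hV'
  have hgap := sum_mul_sub_sum_mul_le univ (x := dvisit P π ρ γ) (y := dvisit P π' ρ γ)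
    fun s _ => hgε s
  have hshift := one_sub_mul_sum_abs_dvisit_sub_le hP0 hP1 hρ0 hπ0 hπ1 hπ'0 hπ'1 hγ0 hγ1
  have hbound : ε * ∑ s, |dvisit P π ρ γ s - dvisit P π' ρ γ s|
      ≤ 2 * γ * ε / (1 - γ) * ∑ s, dvisit P π ρ γ s * dTV (π' s) (π s) := by
    rw [div_mul_eq_mul_div, le_div_iff₀ (by linarith)]
    nlinarith [mul_le_mul_of_nonneg_left hshift hε0, mul_nonneg (mul_nonneg hγ0 hε0) hTV0]
  rw [hpdl]
  linarith

/-- `J(π') ≥ L_π(π') − (2γ ε^π/(1−γ)) · E_{s ~ d^π_ρ}[ D_TV(π'(·|s) ‖ π(·|s)) ]`. -/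
theorem surrogate_lower_bound_policy_tv
    [Nonempty S] [Nonempty A]
    (P : S → A → S → ℝ) (r : S → A → ℝ) (γ : ℝ) (ρ : S → ℝ)
    (hγ0 : 0 ≤ γ) (hγ1 : γ < 1)
    (hP0 : ∀ s a s', 0 ≤ P s a s') (hP1 : ∀ s a, ∑ s', P s a s' = 1)
    (hρ0 : ∀ s, 0 ≤ ρ s) (hρ1 : ∑ s, ρ s = 1)
    (π π' : S → A → ℝ)
    (hπ0 : ∀ s a, 0 ≤ π s a) (hπ1 : ∀ s, ∑ a, π s a = 1)
    (hπ'0 : ∀ s a, 0 ≤ π' s a) (hπ'1 : ∀ s, ∑ a, π' s a = 1)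
    (V V' : S → ℝ)
    (hV : ∀ s, V s = ∑ a, π s a * (r s a + γ * ∑ s', P s a s' * V s'))
    (hV' : ∀ s, V' s = ∑ a, π' s a * (r s a + γ * ∑ s', P s a s' * V' s')) :
    (1 - γ) * ∑ s, ρ s * V' s
      ≥ ((1 - γ) * ∑ s, ρ s * V s
          + ∑ s, dvisit P π ρ γ s *
              ∑ a, π' s a * ((r s a + γ * ∑ s', P s a s' * V s') - V s))
        - (2 * γ * (Finset.univ.sup' Finset.univ_nonempty
              (fun s => |∑ a, π' s a * ((r s a + γ * ∑ s', P s a s' * V s') - V s)|))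
            / (1 - γ))
          * ∑ s, dvisit P π ρ γ s * dTV (π' s) (π s) :=
  surrogate_lower_bound_policy_tv_general P r γ ρ hγ0 hγ1 hP0 hP1 hρ0 π π' hπ0 hπ1 hπ'0 hπ'1 V V'
    hV'
end
end

section
/- Donsker–Varadhan lower bound for the Kullback–Leibler divergence on a finite set: let X be a nonempty finite set, let p and q be probability distributions on X with q(x) > 0 for all x ∈ X, and let f : X → ℝ. Then ∑_{x∈X} p(x) f(x) − log( ∑_{x∈X} q(x) e^{f(x)} ) ≤ D_KL(p ‖ q). -/
/-!
With `Z = ∑ q e^f`, the weights `r = q e^f / Z` have total mass at most one on the support `S`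
of `p`, and the left-hand side minus `D_KL(p ‖ q)` equals `∑_{x ∈ S} p log (r / p)`.
The bound `log t ≤ t - 1` makes this at most `∑_S r - ∑_S p ≤ 1 - 1 = 0`.
-/

open Finset Real

lemma mul_log_div_le_sub {a b : ℝ} (ha : 0 < a) (hb : 0 < b) : a * log (b / a) ≤ b - a := by
  have h := mul_le_mul_of_nonneg_left (log_le_sub_one_of_pos (div_pos hb ha)) ha.le
  rwa [mul_sub, mul_div_cancel₀ _ ha.ne', mul_one] at h

lemma sum_mul_log_div_le_sum_sub_sum {ι : Type*} (s : Finset ι) {a b : ι → ℝ}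
    (ha : ∀ i ∈ s, 0 < a i) (hb : ∀ i ∈ s, 0 < b i) :
    ∑ i ∈ s, a i * log (b i / a i) ≤ ∑ i ∈ s, b i - ∑ i ∈ s, a i := by
  rw [← sum_sub_distrib]
  exact sum_le_sum fun i hi => mul_log_div_le_sub (ha i hi) (hb i hi)

lemma log_mul_exp_div_div {p q z t : ℝ} (hp : 0 < p) (hq : 0 < q) (hz : 0 < z) :
    log (q * exp t / z / p) = t - log z - log (p / q) := by
  rw [log_div (by positivity) hp.ne', log_div (by positivity) hz.ne', log_mul hq.ne' (exp_ne_zero t),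
    log_exp, log_div hp.ne' hq.ne']
  ring

theorem donsker_varadhan_lower_bound_general
    {X : Type*} [Fintype X]
    (p q : X → ℝ)
    (hp0 : ∀ x, 0 ≤ p x) (hp1 : ∑ x, p x = 1)
    (hq0 : ∀ x, 0 < q x)
    (f : X → ℝ) :
    (∑ x, p x * f x) - Real.log (∑ x, q x * Real.exp (f x))
      ≤ ∑ x ∈ Finset.univ.filter (fun x => 0 < p x),
          p x * Real.log (p x / q x) := by
  set S := univ.filter fun x => 0 < p x
  set Z := ∑ x, q x * exp (f x)
  have hS : ∀ x ∈ S, 0 < p x := fun x hx => (mem_filter.1 hx).2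
  have hsupp : ∀ x ∈ univ, p x ≠ 0 → 0 < p x := fun x _ h => (hp0 x).lt_of_ne' h
  have hpS : ∑ x ∈ S, p x = 1 := (sum_filter_of_ne hsupp).trans hp1
  have hpfS : ∑ x ∈ S, p x * f x = ∑ x, p x * f x :=
    sum_filter_of_ne fun x hx h => hsupp x hx (left_ne_zero_of_mul h)
  obtain ⟨x₀, hx₀⟩ := nonempty_of_sum_ne_zero (hpS.trans_ne one_ne_zero)
  have hterm : ∀ x, 0 < q x * exp (f x) := fun x => mul_pos (hq0 x) (exp_pos _)
  have hZ : 0 < Z := sum_pos (fun x _ => hterm x) ⟨x₀, mem_univ _⟩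
  have hmass : ∑ x ∈ S, q x * exp (f x) / Z ≤ 1 := by
    rw [← sum_div, div_le_one hZ]
    exact sum_le_sum_of_subset_of_nonneg (subset_univ S) fun x _ _ => (hterm x).le
  have hgap : ∑ x ∈ S, p x * log (q x * exp (f x) / Z / p x)
      = ∑ x, p x * f x - log Z - ∑ x ∈ S, p x * log (p x / q x) := by
    rw [← hpfS, ← one_mul (log Z), ← hpS, sum_mul, ← sum_sub_distrib, ← sum_sub_distrib]
    refine sum_congr rfl fun x hx => ?_
    rw [log_mul_exp_div_div (hS x hx) (hq0 x) hZ]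
    ring
  have := sum_mul_log_div_le_sum_sub_sum S hS fun x _ => div_pos (hterm x) hZ
  linarith

/-- Donsker–Varadhan lower bound for the Kullback–Leibler divergence on a finite set:
`∑ p(x) f(x) − log(∑ q(x) e^{f(x)}) ≤ D_KL(p ‖ q)`. -/
theorem donsker_varadhan_lower_bound
    {X : Type*} [Fintype X] [Nonempty X]
    (p q : X → ℝ)
    (hp0 : ∀ x, 0 ≤ p x) (hp1 : ∑ x, p x = 1)
    (hq0 : ∀ x, 0 < q x) (hq1 : ∑ x, q x = 1)
    (f : X → ℝ) :
    (∑ x, p x * f x) - Real.log (∑ x, q x * Real.exp (f x))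
      ≤ ∑ x ∈ Finset.univ.filter (fun x => 0 < p x),
          p x * Real.log (p x / q x) :=
  donsker_varadhan_lower_bound_general p q hp0 hp1 hq0 f
end
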